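/- arXiv:2309.05505 — 2 statements merged into one kernel-verified Lean document; each statement's English description precedes it below -/
import Mathlib

section
/- Let B*, B_{c1}, B_{c2} be d×k matrices with orthonormal columns. If s_min(B_{c1}^T B*) ≥ √(1 − a²) and s_min(B_{c2}^T B*) ≥ √(1 − a²) for some a ∈ [0,1] (equivalently dist(B_{ci}, B*) ≤ a), then s_min(B_{c1}^T B_{c2}) ≥ 1 − 2a². -/
open Matrix

noncomputable def specNorm {m n : ℕ} (A : Matrix (Fin m) (Fin n) ℝ) : ℝ :=
  ‖(Matrix.toEuclideanLin A).toContinuousLinearMap‖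

noncomputable def sMin {m n : ℕ} (A : Matrix (Fin m) (Fin n) ℝ) : ℝ :=
  sInf ((fun x : EuclideanSpace ℝ (Fin n) => ‖Matrix.toEuclideanLin A x‖) '' {x | ‖x‖ = 1})

section aux

local notation "⟪" x ", " y "⟫" => inner (𝕜 := ℝ) x y

lemma sq_le_imp {r s : ℝ} (hr : 0 ≤ r) (hs : 0 ≤ s) (h : r ^ 2 ≤ s ^ 2) : r ≤ s := by
  nlinarith

lemma toEL_mul {m n p : ℕ} (A : Matrix (Fin m) (Fin n) ℝ) (B : Matrix (Fin n) (Fin p) ℝ)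
    (x : EuclideanSpace ℝ (Fin p)) :
    Matrix.toEuclideanLin (A * B) x = Matrix.toEuclideanLin A (Matrix.toEuclideanLin B x) := by
  simp [Matrix.toEuclideanLin_apply, Matrix.mulVec_mulVec]

lemma toEL_transpose_inner {m n : ℕ} (A : Matrix (Fin m) (Fin n) ℝ)
    (x : EuclideanSpace ℝ (Fin m)) (y : EuclideanSpace ℝ (Fin n)) :
    ⟪Matrix.toEuclideanLin Aᵀ x, y⟫ = ⟪x, Matrix.toEuclideanLin A y⟫ := by
  have h : Aᵀ = Aᴴ := by ext i j; simp [Matrix.conjTranspose]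
  rw [h, Matrix.toEuclideanLin_conjTranspose_eq_adjoint, LinearMap.adjoint_inner_left]

lemma sMin_nonneg {m n : ℕ} (A : Matrix (Fin m) (Fin n) ℝ) : 0 ≤ sMin A := by
  apply Real.sInf_nonneg
  rintro _ ⟨x, -, rfl⟩
  positivity

lemma sMin_bddBelow {m n : ℕ} (A : Matrix (Fin m) (Fin n) ℝ) :
    BddBelow ((fun x : EuclideanSpace ℝ (Fin n) => ‖Matrix.toEuclideanLin A x‖) '' {x | ‖x‖ = 1}) := by
  refine ⟨0, ?_⟩
  rintro _ ⟨x, -, rfl⟩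
  positivity

lemma sMin_mul_norm_le {m n : ℕ} (A : Matrix (Fin m) (Fin n) ℝ) (x : EuclideanSpace ℝ (Fin n)) :
    sMin A * ‖x‖ ≤ ‖Matrix.toEuclideanLin A x‖ := by
  rcases eq_or_ne x 0 with rfl | hx
  · simp
  · have hnx : ‖x‖ ≠ 0 := norm_ne_zero_iff.mpr hx
    have hmem : ‖(‖x‖)⁻¹ • x‖ = 1 := by
      rw [norm_smul, norm_inv, norm_norm, inv_mul_cancel₀ hnx]
    have h1 : sMin A ≤ ‖Matrix.toEuclideanLin A ((‖x‖)⁻¹ • x)‖ :=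
      csInf_le (sMin_bddBelow A) ⟨_, hmem, rfl⟩
    rw [_root_.map_smul, norm_smul, norm_inv, norm_norm] at h1
    have hle := mul_le_mul_of_nonneg_right h1 (norm_nonneg x)
    calc sMin A * ‖x‖ ≤ ‖x‖⁻¹ * ‖Matrix.toEuclideanLin A x‖ * ‖x‖ := hle
    _ = ‖Matrix.toEuclideanLin A x‖ := by field_simp

lemma adjoint_lower {n : ℕ} (f : EuclideanSpace ℝ (Fin n) →ₗ[ℝ] EuclideanSpace ℝ (Fin n))
    (c : ℝ) (hc : 0 < c) (h : ∀ v, c * ‖v‖ ≤ ‖f v‖)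
    (x : EuclideanSpace ℝ (Fin n)) : c * ‖x‖ ≤ ‖LinearMap.adjoint f x‖ := by
  have hinj : Function.Injective f := by
    rw [← LinearMap.ker_eq_bot, LinearMap.ker_eq_bot']
    intro v hv
    have := h v
    rw [hv, norm_zero] at this
    have : ‖v‖ ≤ 0 := by nlinarith [norm_nonneg v]
    simpa using le_antisymm this (norm_nonneg v)
  have hsurj : Function.Surjective f := (LinearMap.injective_iff_surjective).mp hinj
  obtain ⟨v, hv⟩ := hsurj x
  rcases eq_or_ne x 0 with rfl | hx
  · simp
  · have hip : ⟪x, x⟫ = ⟪v, LinearMap.adjoint f x⟫ := by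
      rw [LinearMap.adjoint_inner_right, hv]
    have h1 : ‖x‖ ^ 2 ≤ ‖v‖ * ‖LinearMap.adjoint f x‖ := by
      calc ‖x‖ ^ 2 = ⟪x, x⟫ := (real_inner_self_eq_norm_sq x).symm
      _ = ⟪v, LinearMap.adjoint f x⟫ := hip
      _ ≤ ‖v‖ * ‖LinearMap.adjoint f x‖ := real_inner_le_norm _ _
    have h2 : c * ‖v‖ ≤ ‖x‖ := by rw [← hv]; exact h v
    have hnx : 0 < ‖x‖ := norm_pos_iff.mpr hx
    nlinarith [norm_nonneg v, norm_nonneg (LinearMap.adjoint f x)]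

lemma toEL_one {k : ℕ} (v : EuclideanSpace ℝ (Fin k)) :
    Matrix.toEuclideanLin (1 : Matrix (Fin k) (Fin k) ℝ) v = v := by
  simp [Matrix.toEuclideanLin_apply]

lemma norm_toEL_of_orth {d k : ℕ} (B : Matrix (Fin d) (Fin k) ℝ) (hB : Bᵀ * B = 1)
    (v : EuclideanSpace ℝ (Fin k)) : ‖Matrix.toEuclideanLin B v‖ = ‖v‖ := by
  have h : ⟪Matrix.toEuclideanLin B v, Matrix.toEuclideanLin B v⟫ = ⟪v, v⟫ := by
    rw [← toEL_transpose_inner B (Matrix.toEuclideanLin B v) v, ← toEL_mul, hB, toEL_one]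
  rw [real_inner_self_eq_norm_sq, real_inner_self_eq_norm_sq] at h
  exact le_antisymm (sq_le_imp (norm_nonneg _) (norm_nonneg _) h.le)
    (sq_le_imp (norm_nonneg _) (norm_nonneg _) h.ge)

lemma transpose_lower {k : ℕ} (M : Matrix (Fin k) (Fin k) ℝ) (c : ℝ) (hc : 0 < c)
    (h : c ≤ sMin M) (x : EuclideanSpace ℝ (Fin k)) :
    c * ‖x‖ ≤ ‖Matrix.toEuclideanLin Mᵀ x‖ := by
  have hM : Mᵀ = Mᴴ := by ext i j; simp [Matrix.conjTranspose]
  rw [hM, Matrix.toEuclideanLin_conjTranspose_eq_adjoint]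
  exact adjoint_lower _ c hc
    (fun v => (mul_le_mul_of_nonneg_right h (norm_nonneg v)).trans (sMin_mul_norm_le M v)) x

lemma residual_sq {d k : ℕ} (B : Matrix (Fin d) (Fin k) ℝ) (hB : Bᵀ * B = 1)
    (y : EuclideanSpace ℝ (Fin d)) :
    ‖y - Matrix.toEuclideanLin B (Matrix.toEuclideanLin Bᵀ y)‖ ^ 2
      = ‖y‖ ^ 2 - ‖Matrix.toEuclideanLin Bᵀ y‖ ^ 2 := by
  have hin : ⟪y, Matrix.toEuclideanLin B (Matrix.toEuclideanLin Bᵀ y)⟫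
      = ‖Matrix.toEuclideanLin Bᵀ y‖ ^ 2 := by
    rw [← toEL_transpose_inner B y (Matrix.toEuclideanLin Bᵀ y), real_inner_self_eq_norm_sq]
  have hnT : ‖Matrix.toEuclideanLin B (Matrix.toEuclideanLin Bᵀ y)‖
      = ‖Matrix.toEuclideanLin Bᵀ y‖ := norm_toEL_of_orth B hB _
  rw [norm_sub_sq_real, hin, hnT]; ring

lemma perp_inner_zero {d k : ℕ} (B : Matrix (Fin d) (Fin k) ℝ)
    (w : EuclideanSpace ℝ (Fin d)) (hw : Matrix.toEuclideanLin Bᵀ w = 0)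
    (q : EuclideanSpace ℝ (Fin k)) : ⟪w, Matrix.toEuclideanLin B q⟫ = 0 := by
  rw [← toEL_transpose_inner B w q, hw, inner_zero_left]

end aux

section main

local notation "⟪" x ", " y "⟫" => inner (𝕜 := ℝ) x y

set_option maxHeartbeats 1000000 in
theorem stmt_3 {d k : ℕ}
    (Bstar Bc1 Bc2 : Matrix (Fin d) (Fin k) ℝ)
    (hBstar : Bstarᵀ * Bstar = 1) (hBc1 : Bc1ᵀ * Bc1 = 1) (hBc2 : Bc2ᵀ * Bc2 = 1)
    (a : ℝ) (ha0 : 0 ≤ a) (ha1 : a ≤ 1)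
    (h1 : Real.sqrt (1 - a ^ 2) ≤ sMin (Bc1ᵀ * Bstar))
    (h2 : Real.sqrt (1 - a ^ 2) ≤ sMin (Bc2ᵀ * Bstar)) :
    1 - 2 * a ^ 2 ≤ sMin (Bc1ᵀ * Bc2) := by
  by_cases htriv : 1 - 2 * a ^ 2 ≤ 0
  · exact htriv.trans (sMin_nonneg _)
  push_neg at htriv
  set c := Real.sqrt (1 - a ^ 2) with hc_def
  have ha2 : a ^ 2 ≤ 1 := by nlinarith
  have hc2 : c ^ 2 = 1 - a ^ 2 := Real.sq_sqrt (by nlinarith)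
  have hc : 0 < c := Real.sqrt_pos.mpr (by nlinarith)
  rcases Nat.eq_zero_or_pos k with hk | hk
  · exfalso
    subst hk
    have hempty : ({x : EuclideanSpace ℝ (Fin 0) | ‖x‖ = 1} : Set _) = ∅ := by
      ext x
      simp only [Set.mem_setOf_eq, Set.mem_empty_iff_false, iff_false]
      have : x = 0 := Subsingleton.elim _ _
      rw [this, norm_zero]; norm_num
    have h0 : sMin (Bc1ᵀ * Bstar) = 0 := by
      unfold sMin
      rw [hempty, Set.image_empty, Real.sInf_empty]
    rw [h0] at h1
    linarith
  have hT1 : ∀ z : EuclideanSpace ℝ (Fin k),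
      c * ‖z‖ ≤ ‖Matrix.toEuclideanLin (Bstarᵀ * Bc1) z‖ := by
    intro z
    have := transpose_lower (Bc1ᵀ * Bstar) c hc h1 z
    rwa [Matrix.transpose_mul, Matrix.transpose_transpose] at this
  apply le_csInf
  · refine ⟨_, ⟨EuclideanSpace.single ⟨0, hk⟩ (1 : ℝ), ?_, rfl⟩⟩
    simp [EuclideanSpace.norm_single]
  rintro _ ⟨x, hx, rfl⟩
  simp only [Set.mem_setOf_eq] at hx
  set y : EuclideanSpace ℝ (Fin d) := Matrix.toEuclideanLin Bc2 x with hy_def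
  set u : EuclideanSpace ℝ (Fin k) := Matrix.toEuclideanLin Bstarᵀ y with hu_def
  set w : EuclideanSpace ℝ (Fin d) := y - Matrix.toEuclideanLin Bstar u with hw_def
  clear_value y u w
  have hy_norm : ‖y‖ = 1 := by rw [hy_def, norm_toEL_of_orth Bc2 hBc2, hx]
  have hu_lb : c ≤ ‖u‖ := by
    have h := transpose_lower (Bc2ᵀ * Bstar) c hc h2 x
    rw [Matrix.transpose_mul, Matrix.transpose_transpose, hx, mul_one, toEL_mul] at h
    rwa [hu_def, hy_def]
  have hstst : ∀ v : EuclideanSpace ℝ (Fin k),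
      Matrix.toEuclideanLin Bstarᵀ (Matrix.toEuclideanLin Bstar v) = v := by
    intro v
    rw [← toEL_mul, hBstar, toEL_one]
  have hw_perp : Matrix.toEuclideanLin Bstarᵀ w = 0 := by
    rw [hw_def, map_sub, hstst u, hu_def, sub_self]
  have hw_sq : ‖w‖ ^ 2 = 1 - ‖u‖ ^ 2 := by
    have h := residual_sq Bstar hBstar y
    rw [← hu_def, ← hw_def, hy_norm] at h
    rw [h]; ring
  have hw_le : ‖w‖ ≤ a := by
    apply sq_le_imp (norm_nonneg _) ha0
    rw [hw_sq]
    nlinarith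
  have hkey : ∀ z : EuclideanSpace ℝ (Fin k),
      ⟪z, Matrix.toEuclideanLin Bc1ᵀ w⟫ ≤ a * ‖z‖ * ‖w‖ := by
    intro z
    set q : EuclideanSpace ℝ (Fin k)
      := Matrix.toEuclideanLin Bstarᵀ (Matrix.toEuclideanLin Bc1 z) with hq_def
    set r : EuclideanSpace ℝ (Fin d)
      := Matrix.toEuclideanLin Bc1 z - Matrix.toEuclideanLin Bstar q with hr_def
    clear_value q r
    have h2' : ⟪w, Matrix.toEuclideanLin Bc1 z⟫ = ⟪w, r⟫ := by
      have hsplit : Matrix.toEuclideanLin Bc1 z = Matrix.toEuclideanLin Bstar q + r := by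
        rw [hr_def]; abel
      rw [hsplit, inner_add_right, perp_inner_zero Bstar w hw_perp q, zero_add]
    have hq_lb : c * ‖z‖ ≤ ‖q‖ := by
      have h := hT1 z
      rwa [toEL_mul, ← hq_def] at h
    have hr_sq : ‖r‖ ^ 2 = ‖Matrix.toEuclideanLin Bc1 z‖ ^ 2 - ‖q‖ ^ 2 := by
      rw [hr_def, hq_def]
      exact residual_sq Bstar hBstar _
    have hz_norm : ‖Matrix.toEuclideanLin Bc1 z‖ = ‖z‖ := norm_toEL_of_orth Bc1 hBc1 z
    have hr_le : ‖r‖ ≤ a * ‖z‖ := by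
      apply sq_le_imp (norm_nonneg _) (by positivity)
      rw [hr_sq, hz_norm]
      have hq2 : (c * ‖z‖) ^ 2 ≤ ‖q‖ ^ 2 :=
        pow_le_pow_left₀ (by positivity) hq_lb 2
      nlinarith [norm_nonneg z]
    calc ⟪z, Matrix.toEuclideanLin Bc1ᵀ w⟫ = ⟪w, r⟫ := by
          rw [real_inner_comm, toEL_transpose_inner, h2']
    _ ≤ ‖w‖ * ‖r‖ := real_inner_le_norm _ _
    _ ≤ ‖w‖ * (a * ‖z‖) := mul_le_mul_of_nonneg_left hr_le (norm_nonneg _)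
    _ = a * ‖z‖ * ‖w‖ := by ring
  have hBc1w : ‖Matrix.toEuclideanLin Bc1ᵀ w‖ ≤ a * ‖w‖ := by
    have h := hkey (Matrix.toEuclideanLin Bc1ᵀ w)
    rw [real_inner_self_eq_norm_sq] at h
    have ht0 : (0:ℝ) ≤ ‖Matrix.toEuclideanLin Bc1ᵀ w‖ := norm_nonneg _
    have hs0 : (0:ℝ) ≤ ‖w‖ := norm_nonneg _
    generalize hgen : ‖Matrix.toEuclideanLin Bc1ᵀ w‖ = t at h ht0 ⊢
    rcases eq_or_lt_of_le ht0 with hz0 | hz0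
    · rw [← hz0]; positivity
    · nlinarith
  have hdecomp : Matrix.toEuclideanLin (Bc1ᵀ * Bc2) x
      = Matrix.toEuclideanLin (Bc1ᵀ * Bstar) u + Matrix.toEuclideanLin Bc1ᵀ w := by
    rw [toEL_mul, toEL_mul, ← map_add, ← hy_def]
    congr 1
    rw [hw_def]; abel
  have hmain_lb : c * ‖u‖ ≤ ‖Matrix.toEuclideanLin (Bc1ᵀ * Bstar) u‖ :=
    (mul_le_mul_of_nonneg_right h1 (norm_nonneg u)).trans (sMin_mul_norm_le _ u)
  have htri : ‖Matrix.toEuclideanLin (Bc1ᵀ * Bstar) u‖ - ‖Matrix.toEuclideanLin Bc1ᵀ w‖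
      ≤ ‖Matrix.toEuclideanLin (Bc1ᵀ * Bc2) x‖ := by
    rw [hdecomp]
    have h := norm_sub_le (Matrix.toEuclideanLin (Bc1ᵀ * Bstar) u + Matrix.toEuclideanLin Bc1ᵀ w)
      (Matrix.toEuclideanLin Bc1ᵀ w)
    simp only [add_sub_cancel_right] at h
    linarith
  have hfin : 1 - 2 * a ^ 2 ≤ c * ‖u‖ - a * ‖w‖ := by nlinarith
  show 1 - 2 * a ^ 2 ≤ ‖Matrix.toEuclideanLin (Bc1ᵀ * Bc2) x‖
  linarith

end main
end

section
/- Let B, B_i, B* be d×k matrices with orthonormal columns. Suppose dist(B_i, B*) ≤ a and dist(B, B*) > b for a, b ∈ [0,1]. Then s_min(B^T B_i) ≤ √(1 − b²) + 1 − √(1 − a²) + a. Consequently, if √(1 − b²) + 1 − √(1 − a²) + a < 1 − 2a², then B cannot satisfy s_min(B^T B_i) ≥ 1 − 2a². -/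
open Matrix

/-- Principal angle distance: dist(B, B*) = ‖(I − B* B*ᵀ) B‖₂. -/
noncomputable def pDist {d k : ℕ} (B Bstar : Matrix (Fin d) (Fin k) ℝ) : ℝ :=
  specNorm ((1 - Bstar * Bstarᵀ) * B)

open scoped Matrix.Norms.L2Operator RealInnerProductSpace

namespace Aux

lemma spec_eq {m n : ℕ} (A : Matrix (Fin m) (Fin n) ℝ) : specNorm A = ‖A‖ := rfl

lemma lin_mul {m n l : ℕ} (A : Matrix (Fin m) (Fin n) ℝ) (B : Matrix (Fin n) (Fin l) ℝ)
    (x : EuclideanSpace ℝ (Fin l)) :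
    Matrix.toEuclideanLin (A * B) x = Matrix.toEuclideanLin A (Matrix.toEuclideanLin B x) := by
  simp [Matrix.toEuclideanLin_apply, Matrix.mulVec_mulVec]

lemma norm_lin_le {m n : ℕ} (A : Matrix (Fin m) (Fin n) ℝ) (x : EuclideanSpace ℝ (Fin n)) :
    ‖Matrix.toEuclideanLin A x‖ ≤ specNorm A * ‖x‖ := by
  simpa [specNorm] using ((Matrix.toEuclideanLin A).toContinuousLinearMap).le_opNorm x

lemma inner_lin {m n : ℕ} (A : Matrix (Fin m) (Fin n) ℝ) (x : EuclideanSpace ℝ (Fin n))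
    (y : EuclideanSpace ℝ (Fin m)) :
    ⟪Matrix.toEuclideanLin A x, y⟫ = ⟪x, Matrix.toEuclideanLin Aᵀ y⟫ := by
  rw [← Matrix.conjTranspose_eq_transpose_of_trivial,
    Matrix.toEuclideanLin_conjTranspose_eq_adjoint, LinearMap.adjoint_inner_right]

lemma lin_one {n : ℕ} (x : EuclideanSpace ℝ (Fin n)) :
    Matrix.toEuclideanLin (1 : Matrix (Fin n) (Fin n) ℝ) x = x := by
  simp [Matrix.toEuclideanLin_apply]

lemma spec_transpose {m n : ℕ} (A : Matrix (Fin m) (Fin n) ℝ) : specNorm Aᵀ = specNorm A := by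
  rw [spec_eq, spec_eq, ← Matrix.conjTranspose_eq_transpose_of_trivial,
    Matrix.l2_opNorm_conjTranspose]

/-- Isometry: orthonormal columns preserve norms. -/
lemma norm_lin_eq {m n : ℕ} {A : Matrix (Fin m) (Fin n) ℝ} (hA : Aᵀ * A = 1)
    (x : EuclideanSpace ℝ (Fin n)) : ‖Matrix.toEuclideanLin A x‖ = ‖x‖ := by
  have h : ⟪Matrix.toEuclideanLin A x, Matrix.toEuclideanLin A x⟫ = ⟪x, x⟫ := by
    rw [inner_lin, ← lin_mul, hA, lin_one]
  have h2 := real_inner_self_eq_norm_sq (Matrix.toEuclideanLin A x)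
  have h3 := real_inner_self_eq_norm_sq x
  nlinarith [norm_nonneg (Matrix.toEuclideanLin A x), norm_nonneg x]

/-- Transposes of orthonormal-column matrices are contractions. -/
lemma norm_lin_transpose_le {m n : ℕ} {A : Matrix (Fin m) (Fin n) ℝ} (hA : Aᵀ * A = 1)
    (y : EuclideanSpace ℝ (Fin m)) : ‖Matrix.toEuclideanLin Aᵀ y‖ ≤ ‖y‖ := by
  have key : ⟪Matrix.toEuclideanLin Aᵀ y, Matrix.toEuclideanLin Aᵀ y⟫ =
      ⟪y, Matrix.toEuclideanLin A (Matrix.toEuclideanLin Aᵀ y)⟫ := by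
    rw [inner_lin, Matrix.transpose_transpose]
  have hle := real_inner_le_norm y (Matrix.toEuclideanLin A (Matrix.toEuclideanLin Aᵀ y))
  rw [norm_lin_eq hA] at hle
  nlinarith [real_inner_self_eq_norm_sq (Matrix.toEuclideanLin Aᵀ y),
    norm_nonneg (Matrix.toEuclideanLin Aᵀ y), norm_nonneg y, key]

lemma sMin_nonneg {m n : ℕ} (A : Matrix (Fin m) (Fin n) ℝ) : 0 ≤ sMin A := by
  apply Real.sInf_nonneg
  rintro x ⟨y, -, rfl⟩; exact norm_nonneg _

lemma sMin_le {m n : ℕ} (A : Matrix (Fin m) (Fin n) ℝ) {x : EuclideanSpace ℝ (Fin n)}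
    (hx : ‖x‖ = 1) : sMin A ≤ ‖Matrix.toEuclideanLin A x‖ := by
  apply csInf_le
  · exact ⟨0, by rintro r ⟨y, -, rfl⟩; exact norm_nonneg _⟩
  · exact ⟨x, hx, rfl⟩

lemma sMin_mul_le {m n : ℕ} (A : Matrix (Fin m) (Fin n) ℝ) (y : EuclideanSpace ℝ (Fin n)) :
    sMin A * ‖y‖ ≤ ‖Matrix.toEuclideanLin A y‖ := by
  rcases eq_or_ne y 0 with rfl | hy
  · simp
  · have hny : (0:ℝ) < ‖y‖ := norm_pos_iff.mpr hy
    have hunit : ‖(‖y‖⁻¹ • y : EuclideanSpace ℝ (Fin n))‖ = 1 := by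
      rw [norm_smul]; simp [abs_of_pos hny, inv_mul_cancel₀ hny.ne']
    have := sMin_le A hunit
    rw [_root_.map_smul, norm_smul] at this
    simp only [norm_inv, norm_norm] at this
    calc sMin A * ‖y‖ ≤ (‖y‖⁻¹ * ‖Matrix.toEuclideanLin A y‖) * ‖y‖ := by
          exact mul_le_mul_of_nonneg_right this hny.le
      _ = ‖Matrix.toEuclideanLin A y‖ := by field_simp

/-- For square matrices, sMin A is bounded by ‖Aᵀ x‖ for any unit x. -/
lemma sMin_le_transpose {k : ℕ} (A : Matrix (Fin k) (Fin k) ℝ) {x : EuclideanSpace ℝ (Fin k)}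
    (hx : ‖x‖ = 1) : sMin A ≤ ‖Matrix.toEuclideanLin Aᵀ x‖ := by
  by_contra hcon
  push_neg at hcon
  have hc : 0 < sMin A := lt_of_le_of_lt (norm_nonneg _) hcon
  have hinj : Function.Injective (Matrix.toEuclideanLin A) := by
    rw [injective_iff_map_eq_zero]
    intro y hy
    have := sMin_mul_le A y
    rw [hy, norm_zero] at this
    have : ‖y‖ = 0 := le_antisymm (by nlinarith) (norm_nonneg y)
    simpa using this
  have hsurj : Function.Surjective (Matrix.toEuclideanLin A) :=
    LinearMap.injective_iff_surjective.mp hinj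
  obtain ⟨y, hy⟩ := hsurj x
  have hiy : ⟪Matrix.toEuclideanLin Aᵀ x, y⟫ = 1 := by
    have := inner_lin Aᵀ x y
    rw [Matrix.transpose_transpose, hy] at this
    rw [this, real_inner_self_eq_norm_sq, hx]; norm_num
  have h1 : (1:ℝ) ≤ ‖Matrix.toEuclideanLin Aᵀ x‖ * ‖y‖ := by
    have := real_inner_le_norm (Matrix.toEuclideanLin Aᵀ x) y
    rw [hiy] at this; exact this
  have h2 : sMin A * ‖y‖ ≤ 1 := by
    have := sMin_mul_le A y
    rw [hy, hx] at this; exact this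
  have hy0 : 0 < ‖y‖ := by
    rcases eq_or_lt_of_le (norm_nonneg y) with h | h
    · exfalso; rw [← h] at h1; simp at h1; linarith
    · exact h
  nlinarith

end Aux

set_option maxHeartbeats 1600000 in
open Aux in
theorem stmt_4 {d k : ℕ}
    (B Bi Bstar : Matrix (Fin d) (Fin k) ℝ)
    (hB : Bᵀ * B = 1) (hBi : Biᵀ * Bi = 1) (hBstar : Bstarᵀ * Bstar = 1)
    (a b : ℝ) (ha0 : 0 ≤ a) (ha1 : a ≤ 1) (hb0 : 0 ≤ b) (hb1 : b ≤ 1)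
    (hdi : pDist Bi Bstar ≤ a) (hd : b < pDist B Bstar) :
    sMin (Bᵀ * Bi) ≤ Real.sqrt (1 - b ^ 2) + 1 - Real.sqrt (1 - a ^ 2) + a ∧
      (Real.sqrt (1 - b ^ 2) + 1 - Real.sqrt (1 - a ^ 2) + a < 1 - 2 * a ^ 2 →
        ¬ (1 - 2 * a ^ 2 ≤ sMin (Bᵀ * Bi))) := by
  set P : Matrix (Fin d) (Fin d) ℝ := Bstar * Bstarᵀ with hP
  -- find a unit vector x̂ with b < ‖(1-P)B x̂‖
  have hnotall : ¬ ∀ x : EuclideanSpace ℝ (Fin k),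
      ‖Matrix.toEuclideanLin ((1 - P) * B) x‖ ≤ b * ‖x‖ := by
    intro hall
    have : specNorm ((1 - P) * B) ≤ b := by
      apply ContinuousLinearMap.opNorm_le_bound _ hb0
      intro x
      simpa using hall x
    unfold pDist at hd
    rw [← hP] at hd
    exact absurd hd (not_lt.mpr this)
  push_neg at hnotall
  obtain ⟨x, hx⟩ := hnotall
  have hx0 : x ≠ 0 := by
    rintro rfl; simp at hx
  have hnx : (0:ℝ) < ‖x‖ := norm_pos_iff.mpr hx0
  set xh : EuclideanSpace ℝ (Fin k) := ‖x‖⁻¹ • x with hxh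
  have hxh1 : ‖xh‖ = 1 := by
    rw [hxh, norm_smul]; simp [abs_of_pos hnx, inv_mul_cancel₀ hnx.ne']
  have hbxh : b < ‖Matrix.toEuclideanLin ((1 - P) * B) xh‖ := by
    rw [hxh, _root_.map_smul, norm_smul]
    simp only [norm_inv, norm_norm]
    have h1 : b * ‖x‖ / ‖x‖ < ‖Matrix.toEuclideanLin ((1 - P) * B) x‖ / ‖x‖ :=
      (div_lt_div_iff_of_pos_right hnx).mpr hx
    rw [mul_div_assoc, div_self hnx.ne', mul_one, div_eq_inv_mul] at h1
    exact h1
  -- u := B x̂ is a unit vector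
  set u : EuclideanSpace ℝ (Fin d) := Matrix.toEuclideanLin B xh with hudef
  have hu : ‖u‖ = 1 := by rw [hudef, norm_lin_eq hB, hxh1]
  set w : EuclideanSpace ℝ (Fin k) := Matrix.toEuclideanLin (Bstarᵀ * B) xh with hwdef
  set v : EuclideanSpace ℝ (Fin d) := Matrix.toEuclideanLin (P * B) xh with hvdef
  have hPT : Pᵀ = P := by rw [hP, Matrix.transpose_mul, Matrix.transpose_transpose]
  have hPP : P * P = P := by
    rw [hP]
    simp only [Matrix.mul_assoc]
    rw [← Matrix.mul_assoc Bstarᵀ Bstar Bstarᵀ, hBstar, Matrix.one_mul]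
  have hvw : v = Matrix.toEuclideanLin Bstar w := by
    rw [hvdef, hwdef, hP, Matrix.mul_assoc, lin_mul]
  have hvnorm : ‖v‖ = ‖w‖ := by rw [hvw, norm_lin_eq hBstar]
  have hvu : v = Matrix.toEuclideanLin P u := by rw [hvdef, hudef, lin_mul]
  -- orthogonality of v and u - v
  have hvv : ⟪v, v⟫ = ⟪v, u⟫ := by
    calc ⟪v, v⟫ = ⟪Matrix.toEuclideanLin P u, v⟫ := by rw [← hvu]
      _ = ⟪u, Matrix.toEuclideanLin Pᵀ v⟫ := inner_lin P u v
      _ = ⟪u, Matrix.toEuclideanLin P (Matrix.toEuclideanLin P u)⟫ := by rw [hPT, hvu]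
      _ = ⟪u, Matrix.toEuclideanLin (P * P) u⟫ := by rw [lin_mul P P u]
      _ = ⟪u, v⟫ := by rw [hPP, ← hvu]
      _ = ⟪v, u⟫ := real_inner_comm _ _
  have horth : ⟪v, u - v⟫ = 0 := by rw [inner_sub_right, hvv, sub_self]
  have pyth : 1 = ‖v‖ ^ 2 + ‖u - v‖ ^ 2 := by
    have hns := norm_add_sq_real v (u - v)
    rw [add_sub_cancel, hu, horth] at hns
    linarith
  have huv : b < ‖u - v‖ := by
    have heq : Matrix.toEuclideanLin ((1 - P) * B) xh = u - v := by
      rw [Matrix.sub_mul, Matrix.one_mul, map_sub, LinearMap.sub_apply, hudef, hvdef]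
    rwa [heq] at hbxh
  have hw2 : ‖w‖ ^ 2 ≤ 1 - b ^ 2 := by
    have hbb : b ^ 2 ≤ ‖u - v‖ ^ 2 := by nlinarith [mul_self_le_mul_self hb0 huv.le]
    have hvw2 : ‖v‖ ^ 2 = ‖w‖ ^ 2 := by rw [hvnorm]
    linarith
  have hwle : ‖w‖ ≤ Real.sqrt (1 - b ^ 2) := by
    rw [← Real.sqrt_sq (norm_nonneg w)]
    exact Real.sqrt_le_sqrt hw2
  -- decomposition Biᵀ B = (Biᵀ B*)(B*ᵀ B) + ((1-P)Bi)ᵀ B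
  have hdecomp : Biᵀ * B = (Biᵀ * Bstar) * (Bstarᵀ * B) + ((1 - P) * Bi)ᵀ * B := by
    have h1 : ((1 - P) * Bi)ᵀ = Biᵀ * (1 - P) := by
      rw [Matrix.transpose_mul, Matrix.transpose_sub, Matrix.transpose_one, hPT]
    have h2 : Biᵀ * P * B = Biᵀ * Bstar * (Bstarᵀ * B) := by
      rw [hP]; simp only [Matrix.mul_assoc]
    rw [h1, Matrix.mul_sub, Matrix.mul_one, Matrix.sub_mul, h2]
    exact (add_sub_cancel _ _).symm
  have hterm1 : ‖Matrix.toEuclideanLin ((Biᵀ * Bstar) * (Bstarᵀ * B)) xh‖ ≤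
      Real.sqrt (1 - b ^ 2) := by
    rw [lin_mul, ← hwdef, lin_mul]
    calc ‖Matrix.toEuclideanLin Biᵀ (Matrix.toEuclideanLin Bstar w)‖
        ≤ ‖Matrix.toEuclideanLin Bstar w‖ := norm_lin_transpose_le hBi _
      _ = ‖w‖ := norm_lin_eq hBstar w
      _ ≤ Real.sqrt (1 - b ^ 2) := hwle
  have hterm2 : ‖Matrix.toEuclideanLin (((1 - P) * Bi)ᵀ * B) xh‖ ≤ a := by
    rw [lin_mul, ← hudef]
    calc ‖Matrix.toEuclideanLin ((1 - P) * Bi)ᵀ u‖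
        ≤ specNorm ((1 - P) * Bi)ᵀ * ‖u‖ := norm_lin_le _ _
      _ = pDist Bi Bstar := by rw [spec_transpose, hu, mul_one]; unfold pDist; rw [← hP]
      _ ≤ a := hdi
  have hsum : ‖Matrix.toEuclideanLin (Biᵀ * B) xh‖ ≤ Real.sqrt (1 - b ^ 2) + a := by
    rw [hdecomp, map_add, LinearMap.add_apply]
    exact (norm_add_le _ _).trans (add_le_add hterm1 hterm2)
  have htr : (Bᵀ * Bi)ᵀ = Biᵀ * B := by
    rw [Matrix.transpose_mul, Matrix.transpose_transpose]
  have hmain : sMin (Bᵀ * Bi) ≤ Real.sqrt (1 - b ^ 2) + a := by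
    have h := sMin_le_transpose (Bᵀ * Bi) hxh1
    rw [htr] at h
    exact h.trans hsum
  have hsq1 : Real.sqrt (1 - a ^ 2) ≤ 1 := by
    have h := Real.sqrt_le_sqrt (show (1:ℝ) - a ^ 2 ≤ 1 by nlinarith)
    simpa using h
  constructor
  · linarith
  · intro h h'
    linarith
end
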